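/- arXiv:2605.19596 — 2 statements merged into one kernel-verified Lean document; each statement's English description precedes it below -/
import Mathlib

section
/- Let q be a prime power, let e divide q−1, and suppose A = C_0^e is a proper (q,k,λ,μ) partial difference set in the additive group of F_q with λ ≠ μ. Then for every i with 0 < i < e, the class C_i^e is NOT a skew PDS corresponding to A; that is, the multiset equality Δ(C_i^e) = λ·A^* + μ·(F_q^*∖A) fails for all 0 < i < e. -/
open Finset

section Defs

variable {G : Type*} [AddCommGroup G] [Fintype G] [DecidableEq G]

/-- The multiset `Δ(D)` of internal differences `x - y` (for `x ≠ y` in `D`). -/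
def intDiff (D : Finset G) : Multiset G :=
  ((D ×ˢ D).filter (fun p => p.1 ≠ p.2)).val.map (fun p => p.1 - p.2)

/-- The multiset `Δ(D, E)` of external differences `x - y` for `x ∈ D`, `y ∈ E`. -/
def extDiff (D E : Finset G) : Multiset G :=
  (D ×ˢ E).val.map (fun p => p.1 - p.2)

/-- The finset `G^*` of nonzero elements of `G`. -/
def Gstar (G : Type*) [AddCommGroup G] [Fintype G] [DecidableEq G] : Finset G :=
  Finset.univ.erase 0

/-- `A` is a `(v, k, lam, mu)` partial difference set in `G`:
`Δ(A) = lam • A^* + mu • (G^* \ A)`. -/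
def IsPDS (A : Finset G) (v k lam mu : ℕ) : Prop :=
  Fintype.card G = v ∧ A.card = k ∧
    intDiff A = lam • (A.erase 0).val + mu • (Gstar G \ A).val

/-- `D` is a `(v, k, lam, mu)` skew partial difference set corresponding to the
`(v, k, lam, mu)`-PDS `A`: `Δ(D) = lam • A^* + mu • (G^* \ A)`. -/
def IsSkewPDS (D A : Finset G) (v k lam mu : ℕ) : Prop :=
  IsPDS A v k lam mu ∧ D.card = k ∧
    intDiff D = lam • (A.erase 0).val + mu • (Gstar G \ A).val

/-- `D` is an `(n, m, k₁, …, k_m; lam, mu)` disjoint partial difference family relative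
to `T`: the `D i` are pairwise disjoint subsets of `G^*` of sizes `k i`, and
`∑ i, Δ(D i) = lam • T + mu • (G^* \ T)`. -/
def IsDPDF {ι : Type*} [Fintype ι] (D : ι → Finset G) (n m : ℕ) (k : ι → ℕ)
    (T : Finset G) (lam mu : ℕ) : Prop :=
  Fintype.card G = n ∧ Fintype.card ι = m ∧
    (∀ i, (0 : G) ∉ D i) ∧ (∀ i, (D i).card = k i) ∧
    (Pairwise (fun i j => Disjoint (D i) (D j))) ∧
    ∑ i, intDiff (D i) = lam • T.val + mu • (Gstar G \ T).val

/-- `D` is an `(n, m, k₁, …, k_m; lam, mu)` external partial difference family relative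
to `T`: the `D i` are pairwise disjoint subsets of `G^*` of sizes `k i`, and
`∑_{i ≠ j}, Δ(D i, D j) = lam • T + mu • (G^* \ T)`. -/
def IsEPDF {ι : Type*} [Fintype ι] [DecidableEq ι] (D : ι → Finset G) (n m : ℕ)
    (k : ι → ℕ) (T : Finset G) (lam mu : ℕ) : Prop :=
  Fintype.card G = n ∧ Fintype.card ι = m ∧
    (∀ i, (0 : G) ∉ D i) ∧ (∀ i, (D i).card = k i) ∧
    (Pairwise (fun i j => Disjoint (D i) (D j))) ∧
    ∑ i, ∑ j ∈ Finset.univ.erase i, extDiff (D i) (D j)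
      = lam • T.val + mu • (Gstar G \ T).val

/-- `D` is an `(n, m, k₁, …, k_m, lam)` disjoint difference family:
`∑ i, Δ(D i) = lam • G^*`. -/
def IsDDF {ι : Type*} [Fintype ι] (D : ι → Finset G) (n m : ℕ) (k : ι → ℕ)
    (lam : ℕ) : Prop :=
  Fintype.card G = n ∧ Fintype.card ι = m ∧
    (∀ i, (0 : G) ∉ D i) ∧ (∀ i, (D i).card = k i) ∧
    (Pairwise (fun i j => Disjoint (D i) (D j))) ∧
    ∑ i, intDiff (D i) = lam • (Gstar G).val

/-- `D` is an `(n, m, k₁, …, k_m, lam)` external difference family: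
`∑_{i ≠ j}, Δ(D i, D j) = lam • G^*`. -/
def IsEDF {ι : Type*} [Fintype ι] [DecidableEq ι] (D : ι → Finset G) (n m : ℕ)
    (k : ι → ℕ) (lam : ℕ) : Prop :=
  Fintype.card G = n ∧ Fintype.card ι = m ∧
    (∀ i, (0 : G) ∉ D i) ∧ (∀ i, (D i).card = k i) ∧
    (Pairwise (fun i j => Disjoint (D i) (D j))) ∧
    ∑ i, ∑ j ∈ Finset.univ.erase i, extDiff (D i) (D j) = lam • (Gstar G).val

end Defs

section Cyclotomy

variable {F : Type*} [Field F] [Fintype F] [DecidableEq F]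

/-- The cyclotomic class `C_i^e = α^i ⟨α^e⟩` of order `e` in the finite field `F`,
with respect to the primitive element `α`.  (Since `α` has multiplicative order at most
`|F| - 1`, letting `j` range over `0, …, |F| - 1` captures the whole class.) -/
def cycClass (α : F) (e i : ℕ) : Finset F :=
  (Finset.range (Fintype.card F)).image (fun j => α ^ (e * j + i))

/-- `α` is a primitive element of the finite field `F`: every nonzero element of `F`
is a power of `α`. -/
def IsPrimitiveElt (α : F) : Prop :=
  ∀ x : F, x ≠ 0 → ∃ n : ℕ, α ^ n = x

end Cyclotomy

/-!
Multiplication by `α^i` is an additive automorphism of `F_q` carrying `A = C_0^e` onto `C_i^e`,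
so `Δ(C_i^e) = α^i Δ(A)`. If both equalled `λ A^* + μ (F_q^* \ A)`, this multiset would be
invariant under `x ↦ α^i x`; but it contains `1 ∈ A` with multiplicity `λ` and
`α^i ∉ A` with multiplicity `μ`.
-/

lemma intDiff_image {G H : Type*} [AddCommGroup G] [DecidableEq G] [AddCommGroup H]
    [DecidableEq H] (f : G →+ H) (hf : Function.Injective f) (D : Finset G) :
    intDiff (D.image f) = (intDiff D).map f := by
  let g : G ↪ H := ⟨f, hf⟩
  rw [show D.image f = D.map g from (map_eq_image g D).symm, intDiff, intDiff,
    ← prodMap_map_product, filter_map, map_val, Multiset.map_map, Multiset.map_map]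
  congr 1
  · ext p
    simp [g]
  · congr 1
    exact filter_congr fun p _ => by simp [g, hf.eq_iff]

section Profile

variable {G : Type*} [AddCommGroup G] [Fintype G] [DecidableEq G]

def pdsProfile (A : Finset G) (lam mu : ℕ) : Multiset G :=
  lam • (A.erase 0).val + mu • (Gstar G \ A).val

lemma count_pdsProfile_of_mem {A : Finset G} {lam mu : ℕ} {x : G} (hx0 : x ≠ 0) (hx : x ∈ A) :
    (pdsProfile A lam mu).count x = lam := by
  have hxA : x ∈ A.erase 0 := mem_erase.2 ⟨hx0, hx⟩
  have hxS : x ∉ Gstar G \ A := fun h => (mem_sdiff.1 h).2 hx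
  rw [pdsProfile, Multiset.count_add, Multiset.count_nsmul, Multiset.count_nsmul,
    Multiset.count_eq_one_of_mem (A.erase 0).nodup hxA, Multiset.count_eq_zero_of_notMem hxS]
  ring

lemma count_pdsProfile_of_notMem {A : Finset G} {lam mu : ℕ} {x : G} (hx0 : x ≠ 0)
    (hx : x ∉ A) : (pdsProfile A lam mu).count x = mu := by
  have hxA : x ∉ A.erase 0 := fun h => hx (mem_of_mem_erase h)
  have hxS : x ∈ Gstar G \ A := mem_sdiff.2 ⟨mem_erase.2 ⟨hx0, mem_univ x⟩, hx⟩
  rw [pdsProfile, Multiset.count_add, Multiset.count_nsmul, Multiset.count_nsmul,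
    Multiset.count_eq_zero_of_notMem hxA, Multiset.count_eq_one_of_mem (Gstar G \ A).nodup hxS]
  ring

lemma lam_eq_mu_of_intDiff_image {A : Finset G} {lam mu : ℕ}
    (hA : intDiff A = pdsProfile A lam mu) (f : G →+ G) (hf : Function.Injective f)
    (hfA : intDiff (A.image f) = pdsProfile A lam mu) {a : G} (ha0 : a ≠ 0) (ha : a ∈ A)
    (hfa : f a ∉ A) : lam = mu := by
  have hinv : (pdsProfile A lam mu).map f = pdsProfile A lam mu := by
    rw [← hA, ← intDiff_image f hf, hA, hfA]
  have hfa0 : f a ≠ 0 := (map_ne_zero_iff f hf).2 ha0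
  calc lam = (pdsProfile A lam mu).count a := (count_pdsProfile_of_mem ha0 ha).symm
    _ = ((pdsProfile A lam mu).map f).count (f a) := (Multiset.count_map_eq_count' f _ hf a).symm
    _ = mu := by rw [hinv, count_pdsProfile_of_notMem hfa0 hfa]

end Profile

section Cyclotomy

variable {F : Type*} [Field F] [Fintype F] [DecidableEq F]

lemma IsPrimitiveElt.ne_zero {α : F} (hα : IsPrimitiveElt α) (hF : 2 < Fintype.card F) :
    α ≠ 0 := by
  rintro rfl
  have hsub : (univ : Finset F) ⊆ {0, 1} := by
    intro x _
    by_cases hx : x = 0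
    · simp [hx]
    obtain ⟨n, hn⟩ := hα x hx
    rcases n with _ | n <;> simp_all [eq_comm]
  have hle := card_le_card hsub
  rw [card_univ] at hle
  exact absurd (hle.trans card_le_two) hF.not_ge

lemma IsPrimitiveElt.orderOf_mk0 {α : F} (hα : IsPrimitiveElt α) (hα0 : α ≠ 0) :
    orderOf (Units.mk0 α hα0) = Fintype.card F - 1 := by
  have hgen : ∀ x : Fˣ, x ∈ Subgroup.zpowers (Units.mk0 α hα0) := by
    intro x
    obtain ⟨n, hn⟩ := hα x x.ne_zero
    exact ⟨n, Units.ext (by simpa using hn)⟩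
  rw [orderOf_eq_card_of_forall_mem_zpowers hgen, Nat.card_eq_fintype_card, Fintype.card_units]

lemma cycClass_eq_image_mul (α : F) (e i : ℕ) :
    cycClass α e i = (cycClass α e 0).image (α ^ i * ·) := by
  rw [cycClass, cycClass, image_image]
  exact image_congr fun j _ => by simp [pow_add, mul_comm]

lemma one_mem_cycClass_zero (α : F) (e : ℕ) : (1 : F) ∈ cycClass α e 0 :=
  mem_image.2 ⟨0, mem_range.2 Fintype.card_pos, by simp⟩

lemma pow_notMem_cycClass_zero {α : F} (hα : IsPrimitiveElt α) (hα0 : α ≠ 0) {e i : ℕ}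
    (he : e ∣ Fintype.card F - 1) (hi0 : 0 < i) (hie : i < e) : α ^ i ∉ cycClass α e 0 := by
  intro hmem
  obtain ⟨j, -, hj⟩ := mem_image.1 hmem
  have hpow : Units.mk0 α hα0 ^ (e * j) = Units.mk0 α hα0 ^ i := Units.ext (by simpa using hj)
  rw [pow_eq_pow_iff_modEq, hα.orderOf_mk0 hα0] at hpow
  have hdvd : e ∣ i := Nat.modEq_zero_iff_dvd.1 <|
    (hpow.of_dvd he).symm.trans (Nat.modEq_zero_iff_dvd.2 (dvd_mul_right e j))
  exact absurd (Nat.le_of_dvd hi0 hdvd) (by omega)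

end Cyclotomy

/-- If `A = C_0^e` is a proper `(q, k, lam, mu)`-PDS in `F_q` with
`lam ≠ mu`, then no `C_i^e` with `0 < i < e` has the internal difference profile of `A`;
i.e. the multiset equality `Δ(C_i^e) = lam • A^* + mu • (F_q^* \ A)` fails. -/
theorem stmt_0 {F : Type*} [Field F] [Fintype F] [DecidableEq F]
    (q : ℕ) (hq : Fintype.card F = q)
    (α : F) (hα : IsPrimitiveElt α)
    (e : ℕ) (he : e ∣ q - 1)
    (k lam mu : ℕ)
    (hA : IsPDS (cycClass α e 0) q k lam mu)
    (hproper : lam ≠ mu) :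
    ∀ i : ℕ, 0 < i → i < e →
      intDiff (cycClass α e i) ≠
        lam • ((cycClass α e 0).erase 0).val +
          mu • (Gstar F \ cycClass α e 0).val := by
  intro i hi0 hie hCi
  subst hq
  have hF : 2 < Fintype.card F := by
    have := Nat.le_of_dvd (Nat.sub_pos_of_lt Fintype.one_lt_card) he
    omega
  have hα0 : α ≠ 0 := hα.ne_zero hF
  refine hproper (lam_eq_mu_of_intDiff_image hA.2.2 (AddMonoidHom.mulLeft (α ^ i))
    (mul_right_injective₀ (pow_ne_zero i hα0)) ?_ one_ne_zero (one_mem_cycClass_zero α e) ?_)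
  · exact (congrArg intDiff (cycClass_eq_image_mul α e i)).symm.trans hCi
  · simpa using pow_notMem_cycClass_zero hα hα0 he hi0 hie
end

section
/- Let G be an abelian group of order v and let A_1,…,A_m be pairwise disjoint subsets of G^*. For each i, let D_i ⊆ G^* be a subset of size k_i satisfying the multiset equality Δ(D_i) = λ_i·A_i + μ_i·(G^*∖A_i), where λ_i − μ_i = δ is the same for all i, and suppose the D_i are pairwise disjoint. Then D = {D_1,…,D_m} is a (v,m,k_1,…,k_m; δ + Σ_{i=1}^m μ_i, Σ_{i=1}^m μ_i)-DPDF relative to T = ∪_{i=1}^m A_i; that is, Σ_{i=1}^m Δ(D_i) = (δ + Σ_i μ_i)·T + (Σ_i μ_i)·(G^*∖T) as multisets. -/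
open Finset

/-! Count multiplicities. Since the `A i` are disjoint, an element of `A j` occurs
`lam j + ∑_{i ≠ j} mu i = δ + ∑ mu` times in `∑ i, Δ(D i)`, and an element of `G^*` outside
every `A i` occurs `∑ mu` times; in particular `δ + ∑ mu ≥ 0` whenever some `A j` is nonempty,
so the `toNat` loses nothing. -/

theorem Finset.count_val {α : Type*} [DecidableEq α] (s : Finset α) (a : α) :
    s.val.count a = if a ∈ s then 1 else 0 :=
  Multiset.count_eq_of_nodup s.nodup

theorem count_nsmul_add_nsmul_sdiff {α : Type*} [DecidableEq α] {A S : Finset α} (hAS : A ⊆ S)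
    (l n : ℕ) (a : α) :
    (l • A.val + n • (S \ A).val).count a = if a ∈ A then l else if a ∈ S then n else 0 := by
  by_cases ha : a ∈ A
  · simp [Finset.count_val, ha, hAS ha]
  · by_cases haS : a ∈ S <;> simp [Finset.count_val, ha, haS]

theorem sum_nsmul_add_nsmul_sdiff {α ι : Type*} [DecidableEq α] [Fintype ι] {S : Finset α}
    {A : ι → Finset α} (hAS : ∀ i, A i ⊆ S) (hA : Pairwise fun i j => Disjoint (A i) (A j))
    {lam mu : ι → ℕ} {δ : ℤ} (hδ : ∀ i, (lam i : ℤ) - mu i = δ) :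
    ∑ i, (lam i • (A i).val + mu i • (S \ A i).val) =
      (δ + ∑ i, (mu i : ℤ)).toNat • (univ.biUnion A).val +
        (∑ i, mu i) • (S \ univ.biUnion A).val := by
  classical
  have hTS : univ.biUnion A ⊆ S := biUnion_subset.mpr fun i _ => hAS i
  ext a
  simp only [Multiset.count_sum', count_nsmul_add_nsmul_sdiff (hAS _),
    count_nsmul_add_nsmul_sdiff hTS]
  by_cases haT : a ∈ univ.biUnion A
  · obtain ⟨j, -, hj⟩ := mem_biUnion.mp haT
    have hnot : ∀ i ≠ j, a ∉ A i := fun i hij hi => disjoint_left.mp (hA hij) hi hj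
    have hsum : δ + ∑ i, (mu i : ℤ) = ((lam j + ∑ i ∈ univ.erase j, mu i : ℕ) : ℤ) := by
      rw [← add_sum_erase _ _ (mem_univ j), ← hδ j]
      push_cast
      ring
    rw [if_pos haT, hsum, Int.toNat_natCast, ← add_sum_erase _ _ (mem_univ j), if_pos hj,
      sum_congr rfl fun i hi => by rw [if_neg (hnot i (ne_of_mem_erase hi)), if_pos (hAS j hj)]]
  · have hnot : ∀ i, a ∉ A i := fun i hi => haT (mem_biUnion.mpr ⟨i, mem_univ i, hi⟩)
    simp only [hnot, haT, if_false]
    exact (ite_sum_zero _ _ _).symm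

theorem stmt_8_general {G : Type*} [AddCommGroup G] [Fintype G] [DecidableEq G]
    (m : ℕ)
    (A D : Fin m → Finset G) (lam mu : Fin m → ℕ) (δ : ℤ)
    (hA0 : ∀ i, (0 : G) ∉ A i)
    (hAdisj : Pairwise (fun i j => Disjoint (A i) (A j)))
    (hdiff : ∀ i, intDiff (D i) = lam i • (A i).val + mu i • (Gstar G \ A i).val)
    (hδ : ∀ i, (lam i : ℤ) - (mu i : ℤ) = δ) :
    ∑ i, intDiff (D i) =
      (δ + ∑ i, (mu i : ℤ)).toNat • (Finset.univ.biUnion A).val +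
        (∑ i, mu i) • (Gstar G \ Finset.univ.biUnion A).val := by
  simp only [hdiff]
  exact sum_nsmul_add_nsmul_sdiff (fun i => subset_erase.mpr ⟨subset_univ _, hA0 i⟩) hAdisj hδ

/-- Let `G` be an abelian group of order `v`, `A_1, …, A_m` pairwise
disjoint subsets of `G^*`, and for each `i` let `D_i ⊆ G^*` of size `k_i` satisfy
`Δ(D_i) = lam_i • A_i + mu_i • (G^* \ A_i)` with `lam_i - mu_i = δ` independent of `i`,
the `D_i` pairwise disjoint.  Then
`∑_i Δ(D_i) = (δ + ∑_i mu_i) • T + (∑_i mu_i) • (G^* \ T)` where `T = ∪_i A_i`;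
i.e. `{D_1, …, D_m}` is a `(v, m, k_1, …, k_m; δ + ∑ mu, ∑ mu)`-DPDF relative to `T`. -/
theorem stmt_8 {G : Type*} [AddCommGroup G] [Fintype G] [DecidableEq G]
    (v m : ℕ) (hv : Fintype.card G = v)
    (A D : Fin m → Finset G) (k lam mu : Fin m → ℕ) (δ : ℤ)
    (hA0 : ∀ i, (0 : G) ∉ A i)
    (hAdisj : Pairwise (fun i j => Disjoint (A i) (A j)))
    (hD0 : ∀ i, (0 : G) ∉ D i)
    (hDk : ∀ i, (D i).card = k i)
    (hDdisj : Pairwise (fun i j => Disjoint (D i) (D j)))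
    (hdiff : ∀ i, intDiff (D i) = lam i • (A i).val + mu i • (Gstar G \ A i).val)
    (hδ : ∀ i, (lam i : ℤ) - (mu i : ℤ) = δ) :
    ∑ i, intDiff (D i) =
      (δ + ∑ i, (mu i : ℤ)).toNat • (Finset.univ.biUnion A).val +
        (∑ i, mu i) • (Gstar G \ Finset.univ.biUnion A).val :=
  stmt_8_general m A D lam mu δ hA0 hAdisj hdiff hδ
end
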